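/- Consider the graph G_X on vertices {v_i, v_i', v_i'', w_j, w_j', w_j'' : i,j ∈ [k]} with edge set: (v_i, w_j) whenever X(i,j) = 1; edges (v_i, v_i') and (v_i, v_i'') for all i ≠ I; and edges (w_j, w_j') and (w_j, w_j'') for all j ≠ J. If X(I,J) = 1, then every vertex cover of G_X has size at least 2k − 1. -/
import Mathlib

inductive GXVert (k : ℕ) : Type
  | v (i : Fin k) | v' (i : Fin k) | v'' (i : Fin k)
  | w (j : Fin k) | w' (j : Fin k) | w'' (j : Fin k)
deriving DecidableEq

def GXRel (k : ℕ) (X : Fin k → Fin k → Bool) (I J : Fin k) :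
    GXVert k → GXVert k → Prop
  | GXVert.v i, GXVert.w j => X i j = true
  | GXVert.v i, GXVert.v' i' => i = i' ∧ i ≠ I
  | GXVert.v i, GXVert.v'' i' => i = i' ∧ i ≠ I
  | GXVert.w j, GXVert.w' j' => j = j' ∧ j ≠ J
  | GXVert.w j, GXVert.w'' j' => j = j' ∧ j ≠ J
  | _, _ => False

deriving instance Fintype for GXVert

def GX (k : ℕ) (X : Fin k → Fin k → Bool) (I J : Fin k) : SimpleGraph (GXVert k) :=
  SimpleGraph.fromRel (GXRel k X I J)

def IsVC {V : Type*} (G : SimpleGraph V) (S : Set V) : Prop :=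
  ∀ ⦃u w : V⦄, G.Adj u w → u ∈ S ∨ w ∈ S

theorem stmt_12 (k : ℕ) (hk : 1 ≤ k) (X : Fin k → Fin k → Bool) (I J : Fin k)
    (hX : X I J = true) :
    ∀ S : Set (GXVert k), IsVC (GX k X I J) S → 2 * k - 1 ≤ S.ncard := by
  intro S hS
  classical
  set f : (Fin k ⊕ {j : Fin k // j ≠ J}) → GXVert k := fun x =>
    match x with
    | Sum.inl i =>
        if i = I then (if GXVert.v I ∈ S then GXVert.v I else GXVert.w J)
        else (if GXVert.v i ∈ S then GXVert.v i else GXVert.v' i)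
    | Sum.inr j =>
        if GXVert.w j.1 ∈ S then GXVert.w j.1 else GXVert.w' j.1
    with hf
  have hrange : Set.range f ⊆ S := by
    rintro x ⟨a, rfl⟩
    rcases a with i | ⟨j, hj⟩
    · by_cases hi : i = I
      · have hadj : (GX k X I J).Adj (GXVert.v I) (GXVert.w J) := by
          simp [GX, SimpleGraph.fromRel_adj, GXRel, hX]
        rcases hS hadj with h | h
        · simp [hf, hi, h]
        · by_cases h2 : GXVert.v I ∈ S <;> simp [hf, hi, h, h2]
      · have hadj : (GX k X I J).Adj (GXVert.v i) (GXVert.v' i) := by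
          simp [GX, SimpleGraph.fromRel_adj, GXRel, hi]
        rcases hS hadj with h | h
        · simp [hf, hi, h]
        · by_cases h2 : GXVert.v i ∈ S <;> simp [hf, hi, h, h2]
    · have hadj : (GX k X I J).Adj (GXVert.w j) (GXVert.w' j) := by
        simp [GX, SimpleGraph.fromRel_adj, GXRel, hj]
      rcases hS hadj with h | h
      · simp [hf, h]
      · by_cases h2 : GXVert.w j ∈ S <;> simp [hf, h, h2]
  have hinj : Function.Injective f := by
    rintro (i | ⟨j, hj⟩) (i' | ⟨j', hj'⟩) hab <;>
      simp only [hf] at hab <;> split_ifs at hab <;>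
      first
        | (simp only [GXVert.w.injEq, GXVert.v.injEq, GXVert.w'.injEq, GXVert.v'.injEq,
             reduceCtorEq] at hab
           first | exact absurd hab (by assumption) | exact absurd hab.symm (by assumption))
        | simp_all
  have h1 : (Set.range f).ncard = 2 * k - 1 := by
    rw [Set.ncard_eq_toFinset_card', Set.toFinset_range,
      Finset.card_image_of_injective _ hinj, Finset.card_univ]
    simp [Fintype.card_subtype_compl]
    omega
  have h2 : (Set.range f).ncard ≤ S.ncard :=
    Set.ncard_le_ncard hrange (Set.toFinite S)
  omega
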